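/- arXiv:2103.04269 — 5 statements merged into one kernel-verified Lean document; each statement's English description precedes it below -/
import Mathlib

section
/- Let P and P' be finite posets, α : P' ⇀ P an order-preserving partial map, M a P-graded module, and M' a P'-graded module over a ring R. A module homomorphism h : M → M' is α-filtered if and only if h(M_L) ⊆ M'_{(α⁻¹(L))^≤} for every down set L of P, where α⁻¹(L) := {p' ∈ dom α : α(p') ∈ L} and S^≤ denotes the down closure of S in P'. -/
/-!
An element of `M'` lies in `M'_S` exactly when its components outside `S` vanish. With this,
the forward direction only has to be checked on each summand `M_p`, `p ∈ L`, where it is the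
filtration condition read contrapositively; the converse takes the down set `L = Iic j`.
-/

namespace DirectSum

theorem mem_biSup_iff_decompose_eq_zero {ι R M : Type*} [DecidableEq ι] [Semiring R]
    [AddCommMonoid M] [Module R M] (𝓜 : ι → Submodule R M) [Decomposition 𝓜]
    {S : Set ι} {x : M} :
    x ∈ ⨆ i ∈ S, 𝓜 i ↔ ∀ i ∉ S, (decompose 𝓜 x i : M) = 0 := by
  classical
  constructor
  · intro hx i hi
    let N : Submodule R M := LinearMap.ker
      ((component R ι (fun i => 𝓜 i) i).comp (decomposeLinearEquiv 𝓜).toLinearMap)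
    have hN : ⨆ j ∈ S, 𝓜 j ≤ N := iSup₂_le fun j hj y hy => by
      simpa [N, decomposeLinearEquiv_apply, ← apply_eq_component] using
        decompose_of_mem_ne 𝓜 hy (ne_of_mem_of_not_mem hj hi)
    simpa [N, decomposeLinearEquiv_apply, ← apply_eq_component] using hN hx
  · intro hx
    rw [← sum_support_decompose 𝓜 x]
    refine Submodule.sum_mem _ fun i hi => ?_
    have hiS : i ∈ S := by
      by_contra hiS
      exact DFinsupp.mem_support_iff.mp hi (Subtype.ext (hx i hiS))
    exact Submodule.mem_iSup_of_mem i (Submodule.mem_iSup_of_mem hiS (decompose 𝓜 x i).2)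

end DirectSum

open DirectSum in
theorem stmt_4_general {R : Type*} [Ring R]
    {P P' : Type*} [PartialOrder P] [PartialOrder P'] [DecidableEq P] [DecidableEq P']
    {M M' : Type*} [AddCommGroup M] [Module R M] [AddCommGroup M'] [Module R M']
    (𝓜 : P → Submodule R M) (𝓜' : P' → Submodule R M')
    [DirectSum.Decomposition 𝓜] [DirectSum.Decomposition 𝓜']
    (D : Set P') (α : P' → P)
    (h : M →ₗ[R] M') :
    (∀ (i : P') (j : P),
        (∃ x ∈ 𝓜 j, (DirectSum.decompose 𝓜' (h x) i : M') ≠ 0) →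
        ∃ i' ∈ D, i ≤ i' ∧ α i' ≤ j) ↔
    (∀ L : Set P, IsLowerSet L →
        ∀ x ∈ (⨆ p ∈ L, 𝓜 p : Submodule R M),
          h x ∈ (⨆ i ∈ {i : P' | ∃ i' ∈ D, α i' ∈ L ∧ i ≤ i'}, 𝓜' i : Submodule R M')) := by
  constructor
  · intro hf L hL x hx
    suffices ⨆ p ∈ L, 𝓜 p ≤ (⨆ i ∈ {i : P' | ∃ i' ∈ D, α i' ∈ L ∧ i ≤ i'}, 𝓜' i).comap h from
      this hx
    refine iSup₂_le fun p hp y hy => ?_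
    refine (mem_biSup_iff_decompose_eq_zero 𝓜').mpr fun i hi => ?_
    by_contra hne
    obtain ⟨i', hi'D, hii', hαi'⟩ := hf i p ⟨y, hy, hne⟩
    exact hi ⟨i', hi'D, hL hαi' hp, hii'⟩
  · rintro hc i j ⟨x, hx, hne⟩
    by_contra hni
    have hxj : x ∈ ⨆ p ∈ Set.Iic j, 𝓜 p :=
      Submodule.mem_iSup_of_mem j (Submodule.mem_iSup_of_mem le_rfl hx)
    refine hne ((mem_biSup_iff_decompose_eq_zero 𝓜').mp (hc _ (isLowerSet_Iic j) x hxj) i ?_)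
    rintro ⟨i', hi'D, hαi', hii'⟩
    exact hni ⟨i', hi'D, hii', hαi'⟩

/-- Let `P`, `P'` be finite posets, `M` a `P`-graded module and `M'` a `P'`-graded module
over a ring `R`, and let `α : P' ⇀ P` be an order-preserving partial map (encoded by its
domain `D ⊆ P'` and a function `α`).  A module homomorphism `h : M → M'` is `α`-filtered
(i.e. whenever the component `h_{ij} = π_i ∘ h ∘ ι_j` is nonzero there is `i' ∈ D` with
`i ≤ i'` and `α i' ≤ j`) if and only if for every down set `L ⊆ P` one has
`h(M_L) ⊆ M'_{(α⁻¹ L)^≤}`, where `α⁻¹ L = {p' ∈ D | α p' ∈ L}` and `S^≤` is the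
down closure of `S` in `P'`. -/
theorem stmt_4 {R : Type*} [Ring R]
    {P P' : Type*} [PartialOrder P] [PartialOrder P'] [Fintype P] [Fintype P'] [DecidableEq P] [DecidableEq P']
    {M M' : Type*} [AddCommGroup M] [Module R M] [AddCommGroup M'] [Module R M']
    (𝓜 : P → Submodule R M) (𝓜' : P' → Submodule R M')
    [DirectSum.Decomposition 𝓜] [DirectSum.Decomposition 𝓜']
    (D : Set P') (α : P' → P)
    (hα : ∀ ⦃i j : P'⦄, i ∈ D → j ∈ D → i ≤ j → α i ≤ α j)
    (h : M →ₗ[R] M') :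
    (∀ (i : P') (j : P),
        (∃ x ∈ 𝓜 j, (DirectSum.decompose 𝓜' (h x) i : M') ≠ 0) →
        ∃ i' ∈ D, i ≤ i' ∧ α i' ≤ j) ↔
    (∀ L : Set P, IsLowerSet L →
        ∀ x ∈ (⨆ p ∈ L, 𝓜 p : Submodule R M),
          h x ∈ (⨆ i ∈ {i : P' | ∃ i' ∈ D, α i' ∈ L ∧ i ≤ i'}, 𝓜' i : Submodule R M')) :=
  stmt_4_general 𝓜 𝓜' D α h
end

section
/- Let P and P' be finite posets, M a P-graded module, M' a P'-graded module over a ring R, α : P' ⇀ P an order-preserving partial map, and h : M → M' an α-filtered module homomorphism. Then there exist an order-preserving partial map α' : P ⇀ P' and an α'-filtered module homomorphism h' : M' → M satisfying α ∘ α' = id_P, α' ∘ α = id_{P'}, h' ∘ h = id_M, and h ∘ h' = id_{M'} if and only if α is a total order isomorphism from P' onto P and, for every p' ∈ P', the component h_{p' α(p')} : M_{α(p')} → M'_{p'} is a module isomorphism. -/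
/-!
If `α` is an order isomorphism, `α`-filteredness of `h` just says that `h` is block triangular:
`h_{ij} ≠ 0` forces `α i ≤ j`. For a block triangular `h`, the component of `h x` at `α⁻¹ m`,
for `m` maximal in the support of `x`, is the diagonal block applied to `x_m`; so invertible
diagonal blocks make `h` injective and make its inverse triangular for `α⁻¹`, while surjectivity
follows by induction up the finite poset `P'`. Conversely, if `h` has an `α'`-filtered inverse
`h'` with `α' = α⁻¹`, the diagonal block of `h' ∘ h` at `α p'` is `h'_{α p', p'} ∘ h_{p', α p'}`,
since every other term of the block product is killed by one of the two triangularity conditions.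
-/

open DirectSum

section Decomposition

variable {ι R M : Type*} [DecidableEq ι] [Ring R] [AddCommGroup M] [Module R M]
  (𝓜 : ι → Submodule R M) [Decomposition 𝓜]

theorem DirectSum.sum_univ_decompose [Fintype ι] (x : M) : ∑ i, (decompose 𝓜 x i : M) = x := by
  conv_rhs => rw [← (decompose 𝓜).symm_apply_apply x, ← sum_univ_of (decompose 𝓜 x)]
  simp [decompose_symm_of]

theorem DirectSum.mem_of_forall_decompose_mem [Fintype ι] {N : Submodule R M} {x : M}
    (hx : ∀ i, (decompose 𝓜 x i : M) ∈ N) : x ∈ N := by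
  rw [← sum_univ_decompose 𝓜 x]
  exact Submodule.sum_mem N fun i _ => hx i

theorem DirectSum.exists_maximal_decompose_ne_zero [PartialOrder ι] [Finite ι] {x : M} {i : ι}
    (hi : (decompose 𝓜 x i : M) ≠ 0) :
    ∃ m, i ≤ m ∧ (decompose 𝓜 x m : M) ≠ 0 ∧ ∀ k, m < k → (decompose 𝓜 x k : M) = 0 := by
  obtain ⟨m, him, hm⟩ := Finite.exists_le_maximal (p := fun k => (decompose 𝓜 x k : M) ≠ 0) hi
  exact ⟨m, him, hm.prop, fun k hmk => not_not.1 fun hk => hm.not_gt hk hmk⟩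

theorem DirectSum.decompose_map_apply_eq_sum [Fintype ι] {ι' M' : Type*} [DecidableEq ι']
    [AddCommGroup M'] [Module R M'] (𝓜' : ι' → Submodule R M') [Decomposition 𝓜']
    (h : M →ₗ[R] M') (x : M) (i : ι') :
    (decompose 𝓜' (h x) i : M') = ∑ k, (decompose 𝓜' (h (decompose 𝓜 x k)) i : M') := by
  conv_lhs => rw [← sum_univ_decompose 𝓜 x]
  rw [map_sum, decompose_sum, DFinsupp.finsetSum_apply, AddSubmonoidClass.coe_finsetSum]

end Decomposition

/-- `α`-filteredness for a total monotone `α`, where the witness `i' ≥ i` can always be `i`. -/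
def IsFiltered {R P P' M M' : Type*} [Ring R] [LE P] [DecidableEq P'] [AddCommGroup M]
    [Module R M] [AddCommGroup M'] [Module R M'] (𝓜 : P → Submodule R M)
    (𝓜' : P' → Submodule R M') [Decomposition 𝓜'] (α : P' → P) (h : M →ₗ[R] M') : Prop :=
  ∀ (i : P') (j : P), ∀ x ∈ 𝓜 j, (decompose 𝓜' (h x) i : M') ≠ 0 → α i ≤ j

section Filtered

variable {R : Type*} [Ring R] {P P' : Type*} [PartialOrder P] [PartialOrder P'] [DecidableEq P']
  {M M' : Type*} [AddCommGroup M] [Module R M] [AddCommGroup M'] [Module R M']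
  {𝓜 : P → Submodule R M} {𝓜' : P' → Submodule R M'} [Decomposition 𝓜'] {h : M →ₗ[R] M'}

theorem isFiltered_of_exists_le {D : Set P'} {α : P' → P} (hα : Monotone α)
    (hfilt : ∀ (i : P') (j : P), (∃ x ∈ 𝓜 j, (decompose 𝓜' (h x) i : M') ≠ 0) →
      ∃ i' ∈ D, i ≤ i' ∧ α i' ≤ j) :
    IsFiltered 𝓜 𝓜' α h := by
  intro i j x hx hne
  obtain ⟨i', -, hii', hi'j⟩ := hfilt i j ⟨x, hx, hne⟩
  exact (hα hii').trans hi'j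

/-- Solving `h x = y` on the diagonal block leaves an error `h x - y` in strictly lower grades. -/
theorem surjective_of_isFiltered [Fintype P'] {e : P' ≃o P} (hh : IsFiltered 𝓜 𝓜' e h)
    (hblock : ∀ p', Function.Surjective fun x : 𝓜 (e p') => decompose 𝓜' (h (x : M)) p') :
    Function.Surjective h := by
  have homogeneous : ∀ p', ∀ y ∈ 𝓜' p', y ∈ LinearMap.range h := by
    intro p'
    induction p' using WellFoundedLT.induction with
    | _ p' IH =>
      intro y hy
      obtain ⟨x, hx⟩ := hblock p' ⟨y, hy⟩
      have hx' : (decompose 𝓜' (h x) p' : M') = y := congrArg Subtype.val hx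
      have lower : ∀ i, (decompose 𝓜' (h x - y) i : M') ≠ 0 → i < p' := by
        intro i hi
        rcases eq_or_ne i p' with rfl | hip'
        · simp [hx', decompose_of_mem_same 𝓜' hy] at hi
        · rw [decompose_sub, DFinsupp.sub_apply, Submodule.coe_sub,
            decompose_of_mem_ne 𝓜' hy hip'.symm, sub_zero] at hi
          exact (e.le_iff_le.1 (hh i _ _ x.2 hi)).lt_of_ne hip'
      have herr : h x - y ∈ LinearMap.range h := by
        refine mem_of_forall_decompose_mem 𝓜' fun i => ?_
        by_cases hi : (decompose 𝓜' (h x - y) i : M') = 0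
        · rw [hi]; exact zero_mem _
        · exact IH i (lower i hi) _ (SetLike.coe_mem _)
      simpa using sub_mem (LinearMap.mem_range_self h x) herr
  exact fun y => mem_of_forall_decompose_mem 𝓜' fun i => homogeneous i _ (SetLike.coe_mem _)

variable [DecidableEq P] [Decomposition 𝓜] (e : P' ≃o P)

theorem decompose_comp_apply_of_isFiltered [Fintype P'] {h' : M' →ₗ[R] M}
    (hh : IsFiltered 𝓜 𝓜' e h) (hh' : IsFiltered 𝓜' 𝓜 e.symm h') {i : P'} {j : P}
    (hij : e i = j) {x : M} (hx : x ∈ 𝓜 j) :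
    (decompose 𝓜 (h' (decompose 𝓜' (h x) i)) j : M) = decompose 𝓜 (h' (h x)) j := by
  rw [decompose_map_apply_eq_sum 𝓜' 𝓜 h' (h x) j]
  symm
  refine Finset.sum_eq_single_of_mem i (Finset.mem_univ _) fun k _ hki => ?_
  by_contra hne
  have hhk : (decompose 𝓜' (h x) k : M') ≠ 0 := fun h0 => hne (by simp [h0])
  have hki_le : k ≤ i := e.le_iff_le.1 (hij ▸ hh k j x hx hhk)
  have hik_le : i ≤ k := by simpa [← hij] using hh' j k _ (SetLike.coe_mem _) hne
  exact hki (le_antisymm hki_le hik_le)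

theorem bijective_block_of_comp_eq_id [Fintype P] [Fintype P'] {h' : M' →ₗ[R] M}
    (hh : IsFiltered 𝓜 𝓜' e h) (hh' : IsFiltered 𝓜' 𝓜 e.symm h')
    (h'h : h' ∘ₗ h = LinearMap.id) (hh'_id : h ∘ₗ h' = LinearMap.id) (p' : P') :
    Function.Bijective fun x : 𝓜 (e p') => decompose 𝓜' (h (x : M)) p' := by
  refine Function.bijective_iff_has_inverse.2 ⟨fun y => decompose 𝓜 (h' y) (e p'), ?_, ?_⟩
  · intro x
    ext
    rw [decompose_comp_apply_of_isFiltered e hh hh' rfl x.2, ← LinearMap.comp_apply, h'h,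
      LinearMap.id_apply, decompose_of_mem_same 𝓜 x.2]
  · intro y
    ext
    have := decompose_comp_apply_of_isFiltered e.symm hh' (by simpa using hh)
      (e.symm_apply_apply p') y.2
    rwa [← LinearMap.comp_apply h h', hh'_id, LinearMap.id_apply,
      decompose_of_mem_same 𝓜' y.2] at this

variable {e}

/-- The leading term of `h x` at a maximal grade of `x` comes from the diagonal block alone. -/
theorem decompose_map_ne_zero_of_maximal [Fintype P] (hh : IsFiltered 𝓜 𝓜' e h)
    (hblock : ∀ p', Function.Injective fun x : 𝓜 (e p') => decompose 𝓜' (h (x : M)) p')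
    {x : M} {q : P'} (hxq : (decompose 𝓜 x (e q) : M) ≠ 0)
    (hmax : ∀ k, e q < k → (decompose 𝓜 x k : M) = 0) :
    (decompose 𝓜' (h x) q : M') ≠ 0 := by
  have hdiag : (decompose 𝓜' (h x) q : M') = decompose 𝓜' (h (decompose 𝓜 x (e q))) q := by
    rw [decompose_map_apply_eq_sum 𝓜 𝓜' h x q]
    refine Finset.sum_eq_single_of_mem (e q) (Finset.mem_univ _) fun k _ hk => ?_
    by_contra hne
    have hxk : (decompose 𝓜 x k : M) ≠ 0 := fun h0 => hne (by simp [h0])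
    exact hxk (hmax k ((hh q k _ (SetLike.coe_mem _) hne).lt_of_ne (Ne.symm hk)))
  rw [hdiag]
  intro h0
  refine hxq (congrArg Subtype.val (hblock q (a₂ := 0) (Subtype.ext ?_)))
  simpa using h0

theorem injective_of_isFiltered [Fintype P] (hh : IsFiltered 𝓜 𝓜' e h)
    (hblock : ∀ p', Function.Injective fun x : 𝓜 (e p') => decompose 𝓜' (h (x : M)) p') :
    Function.Injective h := by
  refine (injective_iff_map_eq_zero h).2 fun x hx => ?_
  by_contra hx0
  obtain ⟨i, hi⟩ : ∃ i, (decompose 𝓜 x i : M) ≠ 0 := by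
    by_contra! hzero
    exact hx0 (by rw [← sum_univ_decompose 𝓜 x]; simp [hzero])
  obtain ⟨m, -, hm, hmax⟩ := exists_maximal_decompose_ne_zero 𝓜 hi
  rw [← e.apply_symm_apply m] at hm hmax
  exact decompose_map_ne_zero_of_maximal hh hblock hm hmax (by simp [hx])

theorem isFiltered_symm_of_rightInverse [Fintype P] (hh : IsFiltered 𝓜 𝓜' e h)
    (hblock : ∀ p', Function.Injective fun x : 𝓜 (e p') => decompose 𝓜' (h (x : M)) p')
    {g : M' →ₗ[R] M} (hg : ∀ y, h (g y) = y) : IsFiltered 𝓜' 𝓜 e.symm g := by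
  intro i j y hy hi
  obtain ⟨m, him, hm, hmax⟩ := exists_maximal_decompose_ne_zero 𝓜 hi
  rw [← e.apply_symm_apply m] at hm hmax
  have hne := decompose_map_ne_zero_of_maximal hh hblock hm hmax
  rw [hg] at hne
  obtain rfl : e.symm m = j := by
    by_contra hmj
    exact hne (decompose_of_mem_ne 𝓜' hy (Ne.symm hmj))
  exact e.symm.monotone him

end Filtered

/-- Let `P`, `P'` be finite posets, `M` a `P`-graded and `M'` a `P'`-graded module over a
ring `R`, `α : P' ⇀ P` an order-preserving partial map (encoded by its domain `D ⊆ P'` and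
a function `α`), and `h : M → M'` an `α`-filtered module homomorphism.  Then there exist an
order-preserving partial map `α' : P ⇀ P'` (encoded by `(E, β)`) and an `α'`-filtered module
homomorphism `h' : M' → M` with `α ∘ α' = id_P`, `α' ∘ α = id_{P'}`, `h' ∘ h = id_M` and
`h ∘ h' = id_{M'}` if and only if `α` is a total order isomorphism from `P'` onto `P` and,
for every `p' ∈ P'`, the component `h_{p' α(p')} : M_{α(p')} → M'_{p'}` is a module
isomorphism. -/
theorem stmt_5 {R : Type*} [Ring R]
    {P P' : Type*} [PartialOrder P] [PartialOrder P']
    [Fintype P] [Fintype P'] [DecidableEq P] [DecidableEq P']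
    {M M' : Type*} [AddCommGroup M] [Module R M] [AddCommGroup M'] [Module R M']
    (𝓜 : P → Submodule R M) (𝓜' : P' → Submodule R M')
    [DirectSum.Decomposition 𝓜] [DirectSum.Decomposition 𝓜']
    (D : Set P') (α : P' → P)
    (hα : ∀ ⦃i j : P'⦄, i ∈ D → j ∈ D → i ≤ j → α i ≤ α j)
    (h : M →ₗ[R] M')
    (hfilt : ∀ (i : P') (j : P),
        (∃ x ∈ 𝓜 j, (DirectSum.decompose 𝓜' (h x) i : M') ≠ 0) →
        ∃ i' ∈ D, i ≤ i' ∧ α i' ≤ j) :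
    (∃ (E : Set P) (β : P → P') (h' : M' →ₗ[R] M),
        (∀ ⦃i j : P⦄, i ∈ E → j ∈ E → i ≤ j → β i ≤ β j) ∧
        (∀ (i : P) (j : P'),
            (∃ x ∈ 𝓜' j, (DirectSum.decompose 𝓜 (h' x) i : M) ≠ 0) →
            ∃ i' ∈ E, i ≤ i' ∧ β i' ≤ j) ∧
        (∀ p : P, p ∈ E ∧ β p ∈ D ∧ α (β p) = p) ∧
        (∀ p' : P', p' ∈ D ∧ α p' ∈ E ∧ β (α p') = p') ∧
        h' ∘ₗ h = LinearMap.id ∧ h ∘ₗ h' = LinearMap.id) ↔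
    (D = Set.univ ∧ Function.Bijective α ∧
        (∀ x y : P', x ≤ y → α x ≤ α y) ∧ (∀ x y : P', α x ≤ α y → x ≤ y) ∧
        ∀ p' : P', Function.Bijective
          (fun x : 𝓜 (α p') => DirectSum.decompose 𝓜' (h (x : M)) p')) := by
  constructor
  · rintro ⟨E, β, h', hβ, hfilt', hαβ, hβα, h'h, hh'⟩
    obtain rfl : D = Set.univ := Set.eq_univ_of_forall fun p' => (hβα p').1
    let e : P' ≃o P :=
      { toFun := α, invFun := β, left_inv := fun p' => (hβα p').2.2,
        right_inv := fun p => (hαβ p).2.2,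
        map_rel_iff' := fun {a b} => ⟨fun hab => by
          have := hβ (hαβ (α a)).1 (hαβ (α b)).1 hab
          rwa [(hβα a).2.2, (hβα b).2.2] at this, hα trivial trivial⟩ }
    exact ⟨rfl, e.bijective, fun _ _ => e.monotone.imp, fun _ _ => e.le_iff_le.1,
      bijective_block_of_comp_eq_id e (isFiltered_of_exists_le e.monotone hfilt)
        (isFiltered_of_exists_le e.symm.monotone hfilt') h'h hh'⟩
  · rintro ⟨rfl, hbij, hmono, hrefl, hblock⟩
    let e : P' ≃o P :=
      { Equiv.ofBijective α hbij with map_rel_iff' := ⟨hrefl _ _, hmono _ _⟩ }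
    have hh : IsFiltered 𝓜 𝓜' e h := isFiltered_of_exists_le (fun _ _ => hmono _ _) hfilt
    let g := LinearEquiv.ofBijective h
      ⟨injective_of_isFiltered hh fun p' => (hblock p').1,
        surjective_of_isFiltered hh fun p' => (hblock p').2⟩
    have hg : ∀ y, h (g.symm y) = y := g.apply_symm_apply
    refine ⟨Set.univ, e.symm, g.symm, fun _ _ _ _ hij => e.symm.monotone hij, ?_,
      fun p => ⟨trivial, trivial, e.apply_symm_apply p⟩,
      fun p' => ⟨trivial, trivial, e.symm_apply_apply p'⟩,
      LinearMap.ext g.symm_apply_apply, LinearMap.ext hg⟩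
    rintro i j ⟨y, hy, hne⟩
    exact ⟨i, trivial, le_rfl,
      isFiltered_symm_of_rightInverse hh (fun p' => (hblock p').1) hg i j y hy hne⟩
end

section
/- Let X be a finite topological space and let ℰ be an acyclic partition of X, with inherent partial order ≤_ℰ. If 𝒟 ⊆ ℰ is a down set with respect to ≤_ℰ, then the union |𝒟| = ∪𝒟 is closed in X. If 𝒟 ⊆ ℰ is convex with respect to ≤_ℰ, then |𝒟| is locally closed in X. -/
/-- The relation `E ≼ E'` on a partition `ℰ` of a topological space:
`E ∩ cl E' ≠ ∅` (with both sets members of `ℰ`). -/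
def partRel {X : Type*} [TopologicalSpace X] (ℰ : Set (Set X)) : Set X → Set X → Prop :=
  fun E E' => E ∈ ℰ ∧ E' ∈ ℰ ∧ (E ∩ closure E').Nonempty

/-!
A point `x ∈ cl F` lies in some member `E` of the partition, and then `E ≼ F`; so the closure of
a finite union `|𝒟|` of a down set stays inside `|𝒟|`. A convex `𝒟` is the difference of the down
set `↓𝒟` it generates and the down set `↓𝒟 \ 𝒟`, so `|𝒟| = |↓𝒟| \ |↓𝒟 \ 𝒟|` is the difference of
two closed sets.
-/

open Set Relation

section

variable {X : Type*} [TopologicalSpace X] {ℰ 𝒟 : Set (Set X)}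

def downClosure (ℰ 𝒟 : Set (Set X)) : Set (Set X) :=
  {E | E ∈ ℰ ∧ ∃ F ∈ 𝒟, ReflTransGen (partRel ℰ) E F}

theorem isClosed_sUnion_of_downSet [Finite X] (hcover : ⋃₀ ℰ = univ) (h𝒟 : 𝒟 ⊆ ℰ)
    (hdown : ∀ F ∈ 𝒟, ∀ E ∈ ℰ, ReflTransGen (partRel ℰ) E F → E ∈ 𝒟) :
    IsClosed (⋃₀ 𝒟) := by
  refine isClosed_of_closure_subset ?_
  rw [𝒟.toFinite.closure_sUnion]
  simp only [subset_def, mem_iUnion]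
  rintro x ⟨F, hF, hxF⟩
  obtain ⟨E, hE, hxE⟩ : x ∈ ⋃₀ ℰ := hcover ▸ mem_univ x
  exact ⟨E, hdown F hF E hE (.single ⟨hE, h𝒟 hF, x, hxE, hxF⟩), hxE⟩

theorem downClosure_subset : downClosure ℰ 𝒟 ⊆ ℰ := fun _ hE => hE.1

theorem subset_downClosure (h𝒟 : 𝒟 ⊆ ℰ) : 𝒟 ⊆ downClosure ℰ 𝒟 :=
  fun E hE => ⟨h𝒟 hE, E, hE, .refl⟩

theorem mem_downClosure_of_rel {E F : Set X} (hF : F ∈ downClosure ℰ 𝒟) (hE : E ∈ ℰ)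
    (hEF : ReflTransGen (partRel ℰ) E F) : E ∈ downClosure ℰ 𝒟 :=
  let ⟨_, G, hG, hFG⟩ := hF
  ⟨hE, G, hG, hEF.trans hFG⟩

theorem mem_downClosure_diff_of_rel
    (hconv : ∀ D ∈ 𝒟, ∀ F ∈ 𝒟, ∀ E ∈ ℰ,
      ReflTransGen (partRel ℰ) D E → ReflTransGen (partRel ℰ) E F → E ∈ 𝒟)
    {E F : Set X} (hF : F ∈ downClosure ℰ 𝒟 \ 𝒟) (hE : E ∈ ℰ)
    (hEF : ReflTransGen (partRel ℰ) E F) : E ∈ downClosure ℰ 𝒟 \ 𝒟 := by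
  obtain ⟨-, G, hG, hFG⟩ := hF.1
  exact ⟨mem_downClosure_of_rel hF.1 hE hEF,
    fun hE𝒟 => hF.2 (hconv E hE𝒟 G hG F hF.1.1 hEF hFG)⟩

theorem sUnion_eq_sUnion_downClosure_diff (hdisj : ∀ E ∈ ℰ, ∀ F ∈ ℰ, E ≠ F → E ∩ F = ∅)
    (h𝒟 : 𝒟 ⊆ ℰ) : ⋃₀ 𝒟 = ⋃₀ downClosure ℰ 𝒟 \ ⋃₀ (downClosure ℰ 𝒟 \ 𝒟) := by
  ext x
  constructor
  · rintro ⟨D, hD, hxD⟩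
    refine ⟨⟨D, subset_downClosure h𝒟 hD, hxD⟩, ?_⟩
    rintro ⟨E, ⟨hEd, hE𝒟⟩, hxE⟩
    have hED : E ≠ D := fun h => hE𝒟 (h ▸ hD)
    exact (hdisj E (downClosure_subset hEd) D (h𝒟 hD) hED).subset ⟨hxE, hxD⟩
  · rintro ⟨⟨E, hEd, hxE⟩, hx⟩
    by_contra hx𝒟
    exact hx ⟨E, ⟨hEd, fun hE => hx𝒟 ⟨E, hE, hxE⟩⟩, hxE⟩

theorem isLocallyClosed_sUnion_of_convex [Finite X] (hcover : ⋃₀ ℰ = univ)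
    (hdisj : ∀ E ∈ ℰ, ∀ F ∈ ℰ, E ≠ F → E ∩ F = ∅) (h𝒟 : 𝒟 ⊆ ℰ)
    (hconv : ∀ D ∈ 𝒟, ∀ F ∈ 𝒟, ∀ E ∈ ℰ,
      ReflTransGen (partRel ℰ) D E → ReflTransGen (partRel ℰ) E F → E ∈ 𝒟) :
    IsLocallyClosed (⋃₀ 𝒟) := by
  have hdown : IsClosed (⋃₀ downClosure ℰ 𝒟) :=
    isClosed_sUnion_of_downSet hcover downClosure_subset
      fun _ hF _ => mem_downClosure_of_rel hF
  have hrest : IsClosed (⋃₀ (downClosure ℰ 𝒟 \ 𝒟)) :=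
    isClosed_sUnion_of_downSet hcover (sdiff_subset.trans downClosure_subset)
      fun _ hF _ => mem_downClosure_diff_of_rel hconv hF
  rw [sUnion_eq_sUnion_downClosure_diff hdisj h𝒟, sdiff_eq, inter_comm]
  exact hrest.isOpen_compl.isLocallyClosed.inter hdown.isLocallyClosed

end

theorem stmt_13_general {X : Type*} [TopologicalSpace X] [Finite X]
    (ℰ : Set (Set X))
    (hdisj : ∀ E ∈ ℰ, ∀ F ∈ ℰ, E ≠ F → E ∩ F = ∅)
    (hcover : ⋃₀ ℰ = Set.univ)
    (𝒟 : Set (Set X)) (h𝒟 : 𝒟 ⊆ ℰ) :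
    ((∀ F ∈ 𝒟, ∀ E ∈ ℰ, Relation.ReflTransGen (partRel ℰ) E F → E ∈ 𝒟) →
      IsClosed (⋃₀ 𝒟)) ∧
    ((∀ D ∈ 𝒟, ∀ F ∈ 𝒟, ∀ E ∈ ℰ,
        Relation.ReflTransGen (partRel ℰ) D E → Relation.ReflTransGen (partRel ℰ) E F →
        E ∈ 𝒟) →
      ∀ x ∈ ⋃₀ 𝒟, ∃ U ∈ nhds x, IsClosed {y : U | (y : X) ∈ ⋃₀ 𝒟}) :=
  ⟨isClosed_sUnion_of_downSet hcover h𝒟, fun hconv =>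
    ((isLocallyClosed_tfae _).out 0 2).mp
      (isLocallyClosed_sUnion_of_convex hcover hdisj h𝒟 hconv)⟩

/-- Let `ℰ` be an acyclic partition of a finite topological space `X` (a partition into
locally closed sets whose relation `≼` extends to a partial order, equivalently whose
reflexive-transitive closure `≤_ℰ` is antisymmetric), and let `𝒟 ⊆ ℰ`.
(i) If `𝒟` is a down set with respect to the inherent partial order `≤_ℰ`, then `∪𝒟`
is closed in `X`.  (ii) If `𝒟` is convex with respect to `≤_ℰ`, then `∪𝒟` is locally
closed in `X`. -/
theorem stmt_13 {X : Type*} [TopologicalSpace X] [Finite X]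
    (ℰ : Set (Set X))
    (hne : ∀ E ∈ ℰ, E.Nonempty)
    (hdisj : ∀ E ∈ ℰ, ∀ F ∈ ℰ, E ≠ F → E ∩ F = ∅)
    (hcover : ⋃₀ ℰ = Set.univ)
    (hlc : ∀ E ∈ ℰ, ∀ x ∈ E, ∃ U ∈ nhds x, IsClosed {y : U | (y : X) ∈ E})
    (hacyclic : ∀ E ∈ ℰ, ∀ F ∈ ℰ,
      Relation.ReflTransGen (partRel ℰ) E F → Relation.ReflTransGen (partRel ℰ) F E →
      E = F)
    (𝒟 : Set (Set X)) (h𝒟 : 𝒟 ⊆ ℰ) :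
    ((∀ F ∈ 𝒟, ∀ E ∈ ℰ, Relation.ReflTransGen (partRel ℰ) E F → E ∈ 𝒟) →
      IsClosed (⋃₀ 𝒟)) ∧
    ((∀ D ∈ 𝒟, ∀ F ∈ 𝒟, ∀ E ∈ ℰ,
        Relation.ReflTransGen (partRel ℰ) D E → Relation.ReflTransGen (partRel ℰ) E F →
        E ∈ 𝒟) →
      ∀ x ∈ ⋃₀ 𝒟, ∃ U ∈ nhds x, IsClosed {y : U | (y : X) ∈ ⋃₀ 𝒟}) :=
  stmt_13_general ℰ hdisj hcover 𝒟 h𝒟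
end

section
/- Let (X,κ) be a regular Lefschetz complex over a ring R, let 𝒱 be a combinatorial vector field on X, and let Φ = id + ∂^κΓ + Γ∂^κ be the associated combinatorial flow. Then for every x ∈ X, ⟨x, Φx⟩ = 1 if x is a critical cell of 𝒱, and ⟨x, Φx⟩ = 0 otherwise. -/
/-!
The diagonal entry `⟨x, Φ x⟩` is `1 + ⟨x, ∂Γx⟩ + ⟨x, Γ∂x⟩`. Since `Γ` only moves a cell along its
own vector, `⟨x, ∂Γx⟩ = -κ(x⁺,x⁻)⁻¹ κ(x⁺,x⁻) = -1` when `x` is the lower cell of a nontrivial vector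
and `0` otherwise, and symmetrically `⟨x, Γ∂x⟩ = -1` exactly when `x` is the upper cell. As `κ`
lowers dimension by one, a noncritical `x` is exactly one of the two.
-/

section Lefschetz

variable {R : Type*} [Ring R] {X : Type*} [Fintype X] [DecidableEq X]

/-- The linear endomorphism of the free module `X → R` determined by a "matrix"
`m : X → X → R`, sending a generator `x` to `∑ y, m x y • y`.  For `m = κ` this is the
boundary operator `∂^κ` of a Lefschetz complex `(X, κ)`. -/
noncomputable def lmat (m : X → X → R) : (X → R) →ₗ[R] (X → R) where
  toFun c := fun y => ∑ x, c x * m x y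
  map_add' c c' := by
    funext y
    simp [add_mul, Finset.sum_add_distrib]
  map_smul' r c := by
    funext y
    simp [Finset.mul_sum, mul_assoc]

open Classical in
/-- The degree `+1` homomorphism `Γ` associated with a combinatorial vector field,
encoded by the pairing involution `V` : on generators, `Γ x = -κ(x⁺,x⁻)⁻¹ x⁺` if `x` is
a tail (`x = x⁻ ≠ x⁺ = V x`), and `Γ x = 0` otherwise. -/
noncomputable def gammaMap (κ : X → X → R) (V : X → X) : (X → R) →ₗ[R] (X → R) :=
  lmat fun x y => if V x ≠ x ∧ κ (V x) x ≠ 0 ∧ y = V x then -(Ring.inverse (κ (V x) x)) else 0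

/-- The combinatorial flow `Φ = id + ∂^κ ∘ Γ + Γ ∘ ∂^κ` of a combinatorial vector field. -/
noncomputable def flowMap (κ : X → X → R) (V : X → X) : (X → R) →ₗ[R] (X → R) :=
  LinearMap.id + lmat κ ∘ₗ gammaMap κ V + gammaMap κ V ∘ₗ lmat κ

open Classical in
noncomputable def gammaCoeff (κ : X → X → R) (V : X → X) (x y : X) : R :=
  if V x ≠ x ∧ κ (V x) x ≠ 0 ∧ y = V x then -(Ring.inverse (κ (V x) x)) else 0

omit [DecidableEq X] in
theorem lmat_apply (m : X → X → R) (c : X → R) (y : X) :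
    lmat m c y = ∑ x, c x * m x y :=
  rfl

theorem lmat_single_apply (m : X → X → R) (x y : X) : lmat m (Pi.single x 1) y = m x y := by
  rw [lmat_apply, Finset.sum_eq_single x (fun z _ hz => by simp [hz]) (by simp)]
  simp

theorem gammaMap_eq_lmat (κ : X → X → R) (V : X → X) : gammaMap κ V = lmat (gammaCoeff κ V) :=
  rfl

theorem flowMap_single_apply_self (κ : X → X → R) (V : X → X) (x : X) :
    flowMap κ V (Pi.single x 1) x =
      1 + ∑ z, gammaCoeff κ V x z * κ z x + ∑ z, κ x z * gammaCoeff κ V z x := by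
  simp only [flowMap, gammaMap_eq_lmat, LinearMap.add_apply, LinearMap.comp_apply,
    LinearMap.id_apply, Pi.add_apply, Pi.single_eq_same, lmat_apply _ (lmat _ _),
    lmat_single_apply]

omit [Fintype X] [DecidableEq X] in
theorem kappa_eq_zero_of_kappa_ne_zero {dim : X → ℕ} {κ : X → X → R}
    (hκ : ∀ x y : X, κ x y ≠ 0 → dim x = dim y + 1) {x y : X} (hxy : κ x y ≠ 0) :
    κ y x = 0 := by
  by_contra hyx
  have := hκ x y hxy
  have := hκ y x hyx
  omega

open Classical in
theorem sum_gammaCoeff_mul_kappa {κ : X → X → R} (hreg : ∀ x y : X, κ x y ≠ 0 → IsUnit (κ x y))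
    (V : X → X) (x : X) :
    ∑ z, gammaCoeff κ V x z * κ z x = if V x ≠ x ∧ κ (V x) x ≠ 0 then -1 else 0 := by
  rw [Finset.sum_eq_single (V x) (fun z _ hz => by simp [gammaCoeff, hz]) (by simp)]
  simp only [gammaCoeff, and_true]
  split_ifs with h
  · rw [neg_mul, Ring.inverse_mul_cancel _ (hreg _ _ h.2)]
  · exact zero_mul _

open Classical in
theorem sum_kappa_mul_gammaCoeff {κ : X → X → R}
    (hreg : ∀ x y : X, κ x y ≠ 0 → IsUnit (κ x y)) {V : X → X} (hinv : ∀ x, V (V x) = x)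
    (x : X) :
    ∑ z, κ x z * gammaCoeff κ V z x = if V x ≠ x ∧ κ x (V x) ≠ 0 then -1 else 0 := by
  have hoff (z : X) (hz : z ≠ V x) : gammaCoeff κ V z x = 0 := by
    simp [gammaCoeff, show x ≠ V z by rintro rfl; exact hz (hinv z).symm]
  rw [Finset.sum_eq_single (V x) (fun z _ hz => by rw [hoff z hz, mul_zero]) (by simp)]
  simp only [gammaCoeff, hinv, ne_comm (a := x), and_true]
  split_ifs with h
  · rw [mul_neg, Ring.mul_inverse_cancel _ (hreg _ _ h.2)]
  · exact mul_zero _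

theorem stmt_17_general (dim : X → ℕ) (κ : X → X → R)
    (hκ1 : ∀ x y : X, κ x y ≠ 0 → dim x = dim y + 1)
    (hreg : ∀ x y : X, κ x y ≠ 0 → IsUnit (κ x y))
    (V : X → X) (hinv : ∀ x, V (V x) = x)
    (hvec : ∀ x : X, V x ≠ x → κ (V x) x ≠ 0 ∨ κ x (V x) ≠ 0) :
    ∀ x : X, flowMap κ V (Pi.single x 1) x = if V x = x then 1 else 0 := by
  intro x
  rw [flowMap_single_apply_self, sum_gammaCoeff_mul_kappa hreg, sum_kappa_mul_gammaCoeff hreg hinv]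
  by_cases hx : V x = x
  · simp [hx]
  · rcases hvec x hx with hdown | hup
    · simp [hx, hdown, kappa_eq_zero_of_kappa_ne_zero hκ1 hdown]
    · simp [hx, hup, kappa_eq_zero_of_kappa_ne_zero hκ1 hup]

/-- Let `(X,κ)` be a regular Lefschetz complex and `𝒱` a combinatorial vector field on
`X`, encoded by the involution `V` pairing each cell with its partner (`V x = x` for a
critical cell, and the vector `{x, V x}` has one cell a facet of the other otherwise).
Then for the combinatorial flow `Φ` one has `⟨x, Φ x⟩ = 1` if `x` is critical and
`⟨x, Φ x⟩ = 0` otherwise. -/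
theorem stmt_17 (dim : X → ℕ) (κ : X → X → R)
    (hκ1 : ∀ x y : X, κ x y ≠ 0 → dim x = dim y + 1)
    (hκ2 : ∀ x z : X, ∑ y, κ x y * κ y z = 0)
    (hreg : ∀ x y : X, κ x y ≠ 0 → IsUnit (κ x y))
    (V : X → X) (hinv : ∀ x, V (V x) = x)
    (hvec : ∀ x : X, V x ≠ x → κ (V x) x ≠ 0 ∨ κ x (V x) ≠ 0) :
    ∀ x : X, flowMap κ V (Pi.single x 1) x = if V x = x then 1 else 0 :=
  stmt_17_general dim κ hκ1 hreg V hinv hvec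

end Lefschetz
end

section
/- Let (X,κ) be a regular Lefschetz complex over a ring R and let 𝒱 be a gradient combinatorial vector field on X, with combinatorial flow Φ, set of critical cells X^c and set of heads X⁺. Then for every critical cell x ∈ X^c and every n ≥ 1 one has Φⁿx = x + rₙ for a chain rₙ whose support satisfies |rₙ| ⊆ X⁺ ∩ |[x]^{<_𝒱}|. Consequently, for every n ≥ 1 the restriction of Φⁿ to the submodule C(X^c) spanned by X^c is injective. -/
section Lefschetz

variable {R : Type*} [Ring R] {X : Type*} [Fintype X] [DecidableEq X]

/-- The relation `≤_κ` (reflexive-transitive closure of the facet relation). -/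
def kle (κ : X → X → R) : X → X → Prop :=
  Relation.ReflTransGen fun a b => κ b a ≠ 0

/-- The relation `≼` between the vectors `[y] = {y, V y}` and `[x] = {x, V x}` of a
combinatorial vector field: `[y] ≼ [x]` iff `[y] ∩ cl [x] ≠ ∅`, i.e. some cell of `[y]`
is `≤_κ` some cell of `[x]`. -/
def vectRel (κ : X → X → R) (V : X → X) : X → X → Prop :=
  fun y x => ∃ a, (a = y ∨ a = V y) ∧ ∃ b, (b = x ∨ b = V x) ∧ kle κ a b

/-- The preorder `≤_𝒱` induced on vectors: reflexive-transitive closure of `≼`. -/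
def vle (κ : X → X → R) (V : X → X) : X → X → Prop :=
  Relation.ReflTransGen (vectRel κ V)

end Lefschetz

section VectorField

variable {R : Type*} [Ring R] {X : Type*}

/-- The cell `z` is a head of the vector field `V`: `z = z⁺ ≠ z⁻ = V z`. -/
def IsHead (κ : X → X → R) (V : X → X) (z : X) : Prop :=
  V z ≠ z ∧ κ z (V z) ≠ 0

/-- In a graded complex a head is never a tail. -/
lemma IsHead.kappa_eq_zero {dim : X → ℕ} {κ : X → X → R}
    (hκ : ∀ x y : X, κ x y ≠ 0 → dim x = dim y + 1) {V : X → X} {z : X}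
    (hz : IsHead κ V z) : κ (V z) z = 0 := by
  by_contra h
  have := hκ z (V z) hz.2
  have := hκ (V z) z h
  omega

lemma IsHead.ne_of_apply_eq_self {κ : X → X → R} {V : X → X} {z x : X}
    (hz : IsHead κ V z) (hx : V x = x) : z ≠ x := by
  rintro rfl
  exact hz.1 hx

lemma vectRel_of_kappa_ne_zero {κ : X → X → R} (V : X → X) {u w : X} (h : κ u w ≠ 0) :
    vectRel κ V w u :=
  ⟨w, .inl rfl, u, .inl rfl, .single h⟩

lemma vectRel_apply_self {κ : X → X → R} {V : X → X} (hinv : ∀ x, V (V x) = x) (w : X) :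
    vectRel κ V (V w) w :=
  ⟨w, .inr (hinv w).symm, w, .inl rfl, .refl⟩

variable [Fintype X]

lemma exists_ne_zero_of_lmat_apply_ne_zero {m : X → X → R} {c : X → R} {y : X}
    (h : lmat m c y ≠ 0) : ∃ u, c u ≠ 0 ∧ m u y ≠ 0 := by
  obtain ⟨u, -, hu⟩ := Finset.exists_ne_zero_of_sum_ne_zero h
  exact ⟨u, left_ne_zero_of_mul hu, right_ne_zero_of_mul hu⟩

variable [DecidableEq X]

lemma exists_of_gammaMap_apply_ne_zero {κ : X → X → R} {V : X → X} {d : X → R} {y : X}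
    (h : gammaMap κ V d y ≠ 0) : ∃ w, d w ≠ 0 ∧ V w ≠ w ∧ κ (V w) w ≠ 0 ∧ y = V w := by
  obtain ⟨w, hdw, hw⟩ := exists_ne_zero_of_lmat_apply_ne_zero h
  by_cases hcond : V w ≠ w ∧ κ (V w) w ≠ 0 ∧ y = V w
  · exact ⟨w, hdw, hcond⟩
  · exact absurd (if_neg hcond) hw

lemma gammaMap_eq_zero {κ : X → X → R} {V : X → X} {c : X → R}
    (hc : ∀ w, c w ≠ 0 → ¬(V w ≠ w ∧ κ (V w) w ≠ 0)) : gammaMap κ V c = 0 := by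
  funext y
  by_contra hy
  obtain ⟨w, hcw, hVw, hκw, -⟩ := exists_of_gammaMap_apply_ne_zero hy
  exact hc w hcw ⟨hVw, hκw⟩

lemma flowMap_apply_of_gammaMap_eq_zero {κ : X → X → R} {V : X → X} {c : X → R}
    (hc : gammaMap κ V c = 0) : flowMap κ V c = c + gammaMap κ V (lmat κ c) := by
  simp only [flowMap, LinearMap.add_apply, LinearMap.comp_apply, LinearMap.id_apply, hc,
    map_zero, add_zero]

/-- `Γ` vanishes on critical cells and on heads, so on such chains `Φ = id + Γ ∂^κ`, and the
support of `Γ ∂^κ c` consists of heads `V w` of tails `w` that are facets of cells of `c`. -/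
lemma exists_flowMap_pow_apply_eq_add {dim : X → ℕ} {κ : X → X → R}
    (hκ : ∀ x y : X, κ x y ≠ 0 → dim x = dim y + 1) {V : X → X} (hinv : ∀ x, V (V x) = x)
    {c : X → R} (hc : ∀ u, c u ≠ 0 → V u = u) (n : ℕ) :
    ∃ r : X → R, (flowMap κ V ^ n) c = c + r ∧
      ∀ z, r z ≠ 0 → IsHead κ V z ∧ ∃ u, c u ≠ 0 ∧ vle κ V z u := by
  induction n with
  | zero => exact ⟨0, by simp, fun z hz => absurd rfl hz⟩
  | succ n ih =>
    obtain ⟨r, hr, hrs⟩ := ih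
    have below_of_ne_zero : ∀ w, (c + r) w ≠ 0 → c w ≠ 0 ∨ IsHead κ V w ∧
        ∃ u, c u ≠ 0 ∧ vle κ V w u := by
      intro w hw
      by_cases hcw : c w = 0
      · exact .inr (hrs w fun hrw => hw (by simp [hcw, hrw]))
      · exact .inl hcw
    have hΓ : gammaMap κ V (c + r) = 0 := by
      refine gammaMap_eq_zero fun w hw ⟨hVw, hκw⟩ => ?_
      rcases below_of_ne_zero w hw with hcw | ⟨hw, -⟩
      · exact hVw (hc w hcw)
      · exact hκw (hw.kappa_eq_zero hκ)
    refine ⟨r + gammaMap κ V (lmat κ (c + r)), ?_, fun z hz => ?_⟩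
    · rw [pow_succ', Module.End.mul_apply, hr, flowMap_apply_of_gammaMap_eq_zero hΓ, add_assoc]
    by_cases hrz : r z = 0
    · have hΓz : gammaMap κ V (lmat κ (c + r)) z ≠ 0 := by simpa [hrz] using hz
      obtain ⟨w, hdw, hVw, hκw, rfl⟩ := exists_of_gammaMap_apply_ne_zero hΓz
      obtain ⟨u, hu, hκu⟩ := exists_ne_zero_of_lmat_apply_ne_zero hdw
      have hhead : IsHead κ V (V w) := ⟨by rwa [hinv, ne_comm], by rwa [hinv]⟩
      have hwu : vle κ V (V w) u :=
        .head (vectRel_apply_self hinv w) (.single (vectRel_of_kappa_ne_zero V hκu))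
      rcases below_of_ne_zero u hu with hcu | ⟨-, u', hu', hu'u⟩
      · exact ⟨hhead, u, hcu, hwu⟩
      · exact ⟨hhead, u', hu', hwu.trans hu'u⟩
    · exact hrs z hrz

lemma exists_flowMap_pow_single_eq_add {dim : X → ℕ} {κ : X → X → R}
    (hκ : ∀ x y : X, κ x y ≠ 0 → dim x = dim y + 1) {V : X → X} (hinv : ∀ x, V (V x) = x)
    {x : X} (hx : V x = x) (n : ℕ) :
    ∃ r : X → R, (flowMap κ V ^ n) (Pi.single x 1) = Pi.single x 1 + r ∧
      ∀ z, r z ≠ 0 → IsHead κ V z ∧ vle κ V z x ∧ z ≠ x ∧ z ≠ V x := by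
  have eq_of_single_ne_zero : ∀ u, (Pi.single x 1 : X → R) u ≠ 0 → u = x := fun u hu =>
    by_contra fun h => hu (Pi.single_eq_of_ne h 1)
  have hc : ∀ u, (Pi.single x 1 : X → R) u ≠ 0 → V u = u := fun u hu =>
    eq_of_single_ne_zero u hu ▸ hx
  obtain ⟨r, hr, hrs⟩ := exists_flowMap_pow_apply_eq_add hκ hinv hc n
  refine ⟨r, hr, fun z hz => ?_⟩
  obtain ⟨hhead, u, hu, hzu⟩ := hrs z hz
  obtain rfl := eq_of_single_ne_zero u hu
  exact ⟨hhead, hzu, hhead.ne_of_apply_eq_self hx, hx.symm ▸ hhead.ne_of_apply_eq_self hx⟩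

/-- On chains supported on critical cells, `Φⁿ` is the identity modulo chains on heads. -/
lemma flowMap_pow_injOn_critical {dim : X → ℕ} {κ : X → X → R}
    (hκ : ∀ x y : X, κ x y ≠ 0 → dim x = dim y + 1) {V : X → X} (hinv : ∀ x, V (V x) = x)
    (n : ℕ) {c₁ c₂ : X → R} (h₁ : ∀ x, c₁ x ≠ 0 → V x = x) (h₂ : ∀ x, c₂ x ≠ 0 → V x = x)
    (h : (flowMap κ V ^ n) c₁ = (flowMap κ V ^ n) c₂) : c₁ = c₂ := by
  obtain ⟨r₁, hr₁, hs₁⟩ := exists_flowMap_pow_apply_eq_add hκ hinv h₁ n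
  obtain ⟨r₂, hr₂, hs₂⟩ := exists_flowMap_pow_apply_eq_add hκ hinv h₂ n
  funext z
  by_cases hz : V z = z
  · have hr₁z : r₁ z = 0 := by_contra fun h => (hs₁ z h).1.1 hz
    have hr₂z : r₂ z = 0 := by_contra fun h => (hs₂ z h).1.1 hz
    simpa [hr₁, hr₂, hr₁z, hr₂z] using congrFun h z
  · rw [not_imp_comm.mp (h₁ z) hz, not_imp_comm.mp (h₂ z) hz]

end VectorField

section Lefschetz

variable {R : Type*} [Ring R] {X : Type*} [Fintype X] [DecidableEq X]

theorem stmt_19_general (dim : X → ℕ) (κ : X → X → R)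
    (hκ1 : ∀ x y : X, κ x y ≠ 0 → dim x = dim y + 1)
    (V : X → X) (hinv : ∀ x, V (V x) = x) :
    (∀ x : X, V x = x → ∀ n : ℕ, 1 ≤ n →
      ∃ r : X → R,
        (flowMap κ V ^ n) (Pi.single x 1) = Pi.single x 1 + r ∧
        ∀ z : X, r z ≠ 0 →
          (V z ≠ z ∧ κ z (V z) ≠ 0) ∧ vle κ V z x ∧ z ≠ x ∧ z ≠ V x) ∧
    (∀ n : ℕ, 1 ≤ n → ∀ c₁ c₂ : X → R,
      (∀ x : X, c₁ x ≠ 0 → V x = x) → (∀ x : X, c₂ x ≠ 0 → V x = x) →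
      (flowMap κ V ^ n) c₁ = (flowMap κ V ^ n) c₂ → c₁ = c₂) :=
  ⟨fun _ hx n _ => exists_flowMap_pow_single_eq_add hκ1 hinv hx n,
    fun n _ _ _ h₁ h₂ => flowMap_pow_injOn_critical hκ1 hinv n h₁ h₂⟩

/-- Let `(X,κ)` be a regular Lefschetz complex over a ring `R` and `𝒱` a gradient
combinatorial vector field on `X`, encoded by the involution `V` (gradient: the
relation `≤_𝒱` is antisymmetric on vectors).  Then for every critical cell `x`
(`V x = x`) and every `n ≥ 1` one has `Φⁿ x = x + rₙ` where the support of `rₙ`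
consists of heads belonging to vectors strictly below `[x]` in `≤_𝒱`.  Consequently,
the restriction of `Φⁿ` to the chains supported on critical cells is injective. -/
theorem stmt_19 (dim : X → ℕ) (κ : X → X → R)
    (hκ1 : ∀ x y : X, κ x y ≠ 0 → dim x = dim y + 1)
    (hκ2 : ∀ x z : X, ∑ y, κ x y * κ y z = 0)
    (hreg : ∀ x y : X, κ x y ≠ 0 → IsUnit (κ x y))
    (V : X → X) (hinv : ∀ x, V (V x) = x)
    (hvec : ∀ x : X, V x ≠ x → κ (V x) x ≠ 0 ∨ κ x (V x) ≠ 0)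
    (hgrad : ∀ x y : X, vle κ V x y → vle κ V y x → (x = y ∨ x = V y)) :
    (∀ x : X, V x = x → ∀ n : ℕ, 1 ≤ n →
      ∃ r : X → R,
        (flowMap κ V ^ n) (Pi.single x 1) = Pi.single x 1 + r ∧
        ∀ z : X, r z ≠ 0 →
          (V z ≠ z ∧ κ z (V z) ≠ 0) ∧ vle κ V z x ∧ z ≠ x ∧ z ≠ V x) ∧
    (∀ n : ℕ, 1 ≤ n → ∀ c₁ c₂ : X → R,
      (∀ x : X, c₁ x ≠ 0 → V x = x) → (∀ x : X, c₂ x ≠ 0 → V x = x) →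
      (flowMap κ V ^ n) c₁ = (flowMap κ V ^ n) c₂ → c₁ = c₂) :=
  stmt_19_general dim κ hκ1 V hinv

end Lefschetz
end
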